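/- For any finite set of candidates of size M ≥ 3, there exists a profile of three strict linear orders whose QMR digraph has a strongly connected component containing at least 3 candidates; hence the QMR output distribution has support of size at least 3! = 6 restricted to those candidates, and QMR is not a dictatorship. -/

import Mathlib

open scoped Classical

/-- The number of voters in profile `P` who rank `x` above `y`. -/
noncomputable def voteCount {α : Type*} [Fintype α] {N : ℕ}
    (P : Fin N → α → α → Prop) (x y : α) : ℕ :=
  (Finset.univ.filter fun i => P i x y).card

/-- The QMR digraph: an edge points from `x` to `y` iff at least as many voters
rank `x` above `y` as rank `y` above `x`. -/
noncomputable def qmrEdge {α : Type*} [Fintype α] {N : ℕ}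
    (P : Fin N → α → α → Prop) (x y : α) : Prop :=
  voteCount P y x ≤ voteCount P x y

/-- Same strongly connected component of a digraph. -/
def SameSCC {α : Type*} (E : α → α → Prop) (u v : α) : Prop :=
  Relation.ReflTransGen E u v ∧ Relation.ReflTransGen E v u

/-- A strict linear order `r` lies in the support of the QMR output: it respects
the topological order on distinct strongly connected components of the QMR digraph
and every unanimous pairwise preference. -/
noncomputable def inSupport {α : Type*} [Fintype α] {N : ℕ}
    (P : Fin N → α → α → Prop) (r : α → α → Prop) : Prop :=
  IsStrictTotalOrder α r ∧
  (∀ x y, qmrEdge P x y → ¬ SameSCC (qmrEdge P) x y → r x y) ∧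
  (∀ x y, (∀ i, P i x y) → r x y)

/-!
Put three candidates `a, b, c` on top of the cyclic profile `a > b > c`, `c > a > b`,
`b > c > a`, with all remaining candidates in the same order below them in every
ballot. Each pair among `a, b, c` wins `2 : 1`, so the QMR digraph contains the
Condorcet cycle `a → b → c → a` and no pair among them is unanimous, while every
other pair is decided unanimously. The support conditions therefore constrain only
pairs not contained in `{a, b, c}`, on which all six rankings of `a, b, c` placed above
the common tail agree with every voter, so all six lie in the support. The support
thus contains both `a > b` and `b > a`, which no single voter can reproduce.
-/

open Function Relation

lemma sameSCC_refl {α : Type*} {E : α → α → Prop} (x : α) : SameSCC E x x :=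
  ⟨.refl, .refl⟩

section Support

variable {α : Type*} [Fintype α] {N : ℕ}

lemma voteCount_eq_zero {P : Fin N → α → α → Prop} {x y : α} (h : ∀ i, ¬ P i x y) :
    voteCount P x y = 0 := by
  simp [voteCount, h]

lemma voteCount_eq_of_unanimous {P : Fin N → α → α → Prop} {x y : α} (h : ∀ i, P i x y) :
    voteCount P x y = N := by
  simp [voteCount, h]

theorem inSupport_of_agree [NeZero N] {P : Fin N → α → α → Prop} {r : α → α → Prop}
    (hr : IsStrictTotalOrder α r) (S : Set α)
    (hagree : ∀ i x y, ¬ (x ∈ S ∧ y ∈ S) → (P i x y ↔ r x y))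
    (hscc : ∀ x ∈ S, ∀ y ∈ S, SameSCC (qmrEdge P) x y)
    (hdisputed : ∀ x ∈ S, ∀ y ∈ S, ¬ ∀ i, P i x y) :
    inSupport P r := by
  have := hr
  refine ⟨hr, fun x y hedge hsep => ?_, fun x y hunan => ?_⟩
  · have hxy : ¬ (x ∈ S ∧ y ∈ S) := fun h => hsep (hscc x h.1 y h.2)
    rcases trichotomous_of r x y with h | rfl | h
    · exact h
    · exact absurd (sameSCC_refl x) hsep
    · have hyx : ∀ i, P i y x := fun i => (hagree i y x (by tauto)).2 h
      have hnxy : ∀ i, ¬ P i x y := fun i hi => asymm h ((hagree i x y hxy).1 hi)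
      have := NeZero.ne N
      unfold qmrEdge at hedge
      rw [voteCount_eq_of_unanimous hyx, voteCount_eq_zero hnxy] at hedge
      omega
  · by_cases hxy : x ∈ S ∧ y ∈ S
    · exact absurd hunan (hdisputed x hxy.1 y hxy.2)
    · exact (hagree 0 x y hxy).1 (hunan 0)

theorem not_exists_dictator {P : Fin N → α → α → Prop}
    (hP : ∀ i, IsStrictTotalOrder α (P i)) {x y : α}
    (hxy : ∃ r, inSupport P r ∧ r x y) (hyx : ∃ r, inSupport P r ∧ r y x) :
    ¬ ∃ i : Fin N, ∀ x y : α, (∃ r, inSupport P r ∧ r x y) ↔ P i x y := by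
  rintro ⟨i, hi⟩
  exact (hP i).irrefl x ((hP i).trans _ _ _ ((hi x y).1 hxy) ((hi y x).1 hyx))

end Support

lemma sameSCC_of_mem_cycle {α : Type*} {E : α → α → Prop} {a b c : α}
    (hab : E a b) (hbc : E b c) (hca : E c a) :
    ∀ x ∈ ({a, b, c} : Set α), ∀ y ∈ ({a, b, c} : Set α), SameSCC E x y := by
  have reach : ∀ x ∈ ({a, b, c} : Set α), ∀ y ∈ ({a, b, c} : Set α), ReflTransGen E x y := by
    simp only [Set.mem_insert_iff, Set.mem_singleton_iff]
    rintro x (rfl | rfl | rfl) y (rfl | rfl | rfl) <;>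
      first
        | exact .refl
        | exact .single ‹_›
        | exact .head ‹_› (.single ‹_›)
  exact fun x hx y hy => ⟨reach x hx y hy, reach y hy x hx⟩

section TopThree

variable {α : Type*} (e : α → ℕ) (u v w : α)

noncomputable def topThreeKey (x : α) : ℕ :=
  if x = u then 0 else if x = v then 1 else if x = w then 2 else e x + 3

/-- The ballot `u > v > w`, followed by the remaining candidates in increasing order of `e`;
`topThree e u v w x y` means that `x` is ranked above `y`. -/
def topThree : α → α → Prop :=
  (· < ·) on topThreeKey e u v w

variable {e u v w}

lemma topThreeKey_injective (he : Injective e) (huv : u ≠ v) (huw : u ≠ w) (hvw : v ≠ w) :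
    Injective (topThreeKey e u v w) := by
  intro x y h
  unfold topThreeKey at h
  split_ifs at h <;> first | (subst_vars; rfl) | omega | exact he (by omega)

lemma isStrictTotalOrder_topThree (he : Injective e) (huv : u ≠ v) (huw : u ≠ w)
    (hvw : v ≠ w) : IsStrictTotalOrder α (topThree e u v w) :=
  (topThreeKey_injective he huv huw hvw).isStrictTotalOrder_onFun (r := (· < ·))

lemma topThree_first_second (huv : u ≠ v) : topThree e u v w u v := by
  simp [topThree, onFun, topThreeKey, huv.symm]

lemma topThree_second_third (huv : u ≠ v) (huw : u ≠ w) (hvw : v ≠ w) :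
    topThree e u v w v w := by
  simp [topThree, onFun, topThreeKey, huv.symm, huw.symm, hvw.symm]

lemma topThree_iff_of_not_mem {S : Set α} (hS : {u, v, w} = S) {x y : α}
    (h : ¬ (x ∈ S ∧ y ∈ S)) : topThree e u v w x y ↔ y ∉ S ∧ (x ∈ S ∨ e x < e y) := by
  subst hS
  simp only [Set.mem_insert_iff, Set.mem_singleton_iff] at h ⊢
  simp only [topThree, onFun, topThreeKey]
  split_ifs <;> simp_all

end TopThree

section Cyclic

variable {α : Type*} (e : α → ℕ) (a b c : α)

def cyclicProfile : Fin 3 → α → α → Prop :=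
  ![topThree e a b c, topThree e c a b, topThree e b c a]

variable {e a b c}

lemma voteCount_fin_three [Fintype α] (P : Fin 3 → α → α → Prop) (x y : α) :
    voteCount P x y =
      (if P 0 x y then 1 else 0) + (if P 1 x y then 1 else 0) + (if P 2 x y then 1 else 0) := by
  rw [voteCount, Finset.card_filter, Fin.sum_univ_three]

lemma cyclicProfile_isStrictTotalOrder (he : Injective e) (hab : a ≠ b) (hbc : b ≠ c)
    (hac : a ≠ c) (i : Fin 3) : IsStrictTotalOrder α (cyclicProfile e a b c i) := by
  fin_cases i
  · exact isStrictTotalOrder_topThree he hab hac hbc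
  · exact isStrictTotalOrder_topThree he hac.symm hbc.symm hab
  · exact isStrictTotalOrder_topThree he hbc hab.symm hac.symm

lemma cyclicProfile_qmrEdge [Fintype α] (hab : a ≠ b) (hbc : b ≠ c) (hac : a ≠ c) :
    qmrEdge (cyclicProfile e a b c) a b ∧ qmrEdge (cyclicProfile e a b c) b c ∧
      qmrEdge (cyclicProfile e a b c) c a := by
  simp [qmrEdge, voteCount_fin_three, cyclicProfile, topThree, onFun, topThreeKey,
    hab, hbc, hac, hab.symm, hbc.symm, hac.symm]

lemma cyclicProfile_not_unanimous (hab : a ≠ b) (hbc : b ≠ c) (hac : a ≠ c) :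
    ∀ x ∈ ({a, b, c} : Set α), ∀ y ∈ ({a, b, c} : Set α),
      ¬ ∀ i, cyclicProfile e a b c i x y := by
  simp only [Set.mem_insert_iff, Set.mem_singleton_iff]
  rintro x (rfl | rfl | rfl) y (rfl | rfl | rfl) h <;>
    simp [Fin.forall_fin_succ, cyclicProfile, topThree, onFun, topThreeKey, hab, hbc, hac,
      hab.symm, hbc.symm, hac.symm] at h

lemma exists_inSupport_cyclicProfile [Fintype α] (he : Injective e) (hab : a ≠ b)
    (hbc : b ≠ c) (hac : a ≠ c) ⦃u v w : α⦄ (huv : u ≠ v) (huw : u ≠ w) (hvw : v ≠ w)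
    (hS : ({u, v, w} : Set α) = {a, b, c}) :
    ∃ r, inSupport (cyclicProfile e a b c) r ∧ r u v ∧ r v w := by
  obtain ⟨hab', hbc', hca'⟩ := cyclicProfile_qmrEdge (e := e) hab hbc hac
  refine ⟨topThree e u v w, ?_, topThree_first_second huv, topThree_second_third huv huw hvw⟩
  refine inSupport_of_agree (isStrictTotalOrder_topThree he huv huw hvw) {a, b, c} ?_
    (sameSCC_of_mem_cycle hab' hbc' hca') (cyclicProfile_not_unanimous hab hbc hac)
  intro i x y hxy
  rw [topThree_iff_of_not_mem hS hxy]
  fin_cases i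
  · exact topThree_iff_of_not_mem rfl hxy
  · exact topThree_iff_of_not_mem (by rw [Set.insert_comm, Set.pair_comm]) hxy
  · exact topThree_iff_of_not_mem (by rw [Set.pair_comm, Set.insert_comm]) hxy

end Cyclic

/-- For any candidate set of size `M ≥ 3` there is a profile of three strict
linear orders whose QMR digraph has a strongly connected component containing at
least three candidates `a, b, c`; all `3! = 6` relative orderings of `a, b, c`
occur in the support of the QMR output, and QMR is not a dictatorship. -/
theorem qmr_not_dictatorship {α : Type*} [Fintype α] (hcard : 3 ≤ Fintype.card α) :
    ∃ P : Fin 3 → α → α → Prop,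
      (∀ i, IsStrictTotalOrder α (P i)) ∧
      ∃ a b c : α, a ≠ b ∧ b ≠ c ∧ a ≠ c ∧
        SameSCC (qmrEdge P) a b ∧ SameSCC (qmrEdge P) b c ∧
          SameSCC (qmrEdge P) a c ∧
        (∃ r, inSupport P r ∧ r a b ∧ r b c) ∧
        (∃ r, inSupport P r ∧ r a c ∧ r c b) ∧
        (∃ r, inSupport P r ∧ r b a ∧ r a c) ∧
        (∃ r, inSupport P r ∧ r b c ∧ r c a) ∧
        (∃ r, inSupport P r ∧ r c a ∧ r a b) ∧
        (∃ r, inSupport P r ∧ r c b ∧ r b a) ∧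
        ¬ ∃ i : Fin 3, ∀ x y : α, (∃ r, inSupport P r ∧ r x y) ↔ P i x y := by
  obtain ⟨a, b, c, hab, hac, hbc⟩ := Fintype.two_lt_card_iff.1 hcard
  obtain ⟨e, he⟩ := Countable.exists_injective_nat α
  obtain ⟨hab', hbc', hca'⟩ := cyclicProfile_qmrEdge (e := e) hab hbc hac
  have hscc := sameSCC_of_mem_cycle hab' hbc' hca'
  have hP := cyclicProfile_isStrictTotalOrder he hab hbc hac
  have supp := exists_inSupport_cyclicProfile he hab hbc hac
  have habc := supp hab hac hbc rfl
  have hbac := supp hab.symm hbc hac (Set.insert_comm ..)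
  refine ⟨cyclicProfile e a b c, hP, a, b, c, hab, hbc, hac, hscc a (by simp) b (by simp),
    hscc b (by simp) c (by simp), hscc a (by simp) c (by simp), habc,
    supp hac hab hbc.symm (by rw [Set.pair_comm]), hbac,
    supp hbc hab.symm hac.symm (by rw [Set.pair_comm, Set.insert_comm]),
    supp hac.symm hbc.symm hab (by rw [Set.insert_comm, Set.pair_comm]),
    supp hbc.symm hac.symm hab.symm (by rw [Set.pair_comm, Set.insert_comm, Set.pair_comm]),
    not_exists_dictator hP (habc.imp fun _ h => ⟨h.1, h.2.1⟩)
      (hbac.imp fun _ h => ⟨h.1, h.2.1⟩)⟩
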